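/- The comprehension instance C^I := ∃P:ι→o. ∀X:ι. (P X ⟺ X ≐^ι X) is 16-cut-strong in the sequent calculus G_β: from derivations of Δ * C in n steps and Δ * ¬C in m steps (C a β-normal sentence) one obtains a derivation of Δ * ¬C^I — equivalently, since ∃ is defined via ¬ and Π, of Δ * C^I with the negated encoding — in at most n+m+16 steps. -/

import Mathlib

/-!
Cut simulation through the Leibniz equation `a ≐ a`: instantiating its predicate variable by
`λX. C` turns `¬(a ≐ a)` into `¬(¬C ∨ C)`, which follows from the two given derivations in
three more steps. The rest of `¬Cᴵ` costs a fixed number of steps: a fresh eigen-parameter `p`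
for the existential, the instance `a` for the universal, and a split of `¬(p a ⟺ a ≐ a)` into
`¬(p a ⇒ a ≐ a)`, closed by `init` and the 3-step derivation of `a ≐ a` (7 steps), and
`¬(a ≐ a ⇒ p a)`, closed by the cut simulation; with the 6 connective steps this gives
`n + m + 16`. The side formula of the second branch is added by weakening, which preserves
height because eigen-parameters can be renamed apart.
-/

namespace CutSim

inductive Ty : Type
  | o : Ty
  | i : Ty
  | arr : Ty → Ty → Ty
  deriving DecidableEq

inductive Tm : Type
  | var : ℕ → Tm
  | param : ℕ → Ty → Tm
  | cnot : Tm
  | cor : Tm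
  | cpi : Ty → Tm
  | app : Tm → Tm → Tm
  | lam : Ty → Tm → Tm
  deriving DecidableEq

open Ty Tm

/-- negation ¬A -/
def NEG (A : Tm) : Tm := .app .cnot A
/-- disjunction A ∨ B -/
def OR (A B : Tm) : Tm := .app (.app .cor A) B
/-- Π^α F -/
def PI (a : Ty) (F : Tm) : Tm := .app (.cpi a) F
/-- implication A ⇒ B := ¬A ∨ B -/
def IMP (A B : Tm) : Tm := OR (NEG A) B
/-- equivalence A ⟺ B := ¬(¬(A⇒B) ∨ ¬(B⇒A)) -/
def IFF (A B : Tm) : Tm := NEG (OR (NEG (IMP A B)) (NEG (IMP B A)))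

/-- de Bruijn shifting: add d to all variables ≥ c -/
def shift (d c : ℕ) : Tm → Tm
  | .var n => if n < c then .var n else .var (n + d)
  | .param k a => .param k a
  | .cnot => .cnot
  | .cor => .cor
  | .cpi a => .cpi a
  | .app f x => .app (shift d c f) (shift d c x)
  | .lam a b => .lam a (shift d (c+1) b)

/-- capture-avoiding substitution of s for variable k -/
def subst (k : ℕ) (s : Tm) : Tm → Tm
  | .var n => if n = k then shift k 0 s else if k < n then .var (n-1) else .var n
  | .param m a => .param m a
  | .cnot => .cnot
  | .cor => .cor
  | .cpi a => .cpi a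
  | .app f x => .app (subst k s f) (subst k s x)
  | .lam a b => .lam a (subst (k+1) s b)

/-- simple typing relation -/
inductive HasTy : List Ty → Tm → Ty → Prop
  | var {Γ n a} : Γ[n]? = some a → HasTy Γ (.var n) a
  | param {Γ k a} : HasTy Γ (.param k a) a
  | cnot {Γ} : HasTy Γ .cnot (.arr .o .o)
  | cor {Γ} : HasTy Γ .cor (.arr .o (.arr .o .o))
  | cpi {Γ a} : HasTy Γ (.cpi a) (.arr (.arr a .o) .o)
  | app {Γ f x a b} : HasTy Γ f (.arr a b) → HasTy Γ x a → HasTy Γ (.app f x) b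
  | lam {Γ a B b} : HasTy (a :: Γ) B b → HasTy Γ (.lam a B) (.arr a b)

/-- a sentence is a closed formula of type o -/
def Sent (A : Tm) : Prop := HasTy [] A .o

/-- one-step β-reduction -/
inductive Beta : Tm → Tm → Prop
  | beta {a B s} : Beta (.app (.lam a B) s) (subst 0 s B)
  | appl {f f' x} : Beta f f' → Beta (.app f x) (.app f' x)
  | appr {f x x'} : Beta x x' → Beta (.app f x) (.app f x')
  | lam {a b b'} : Beta b b' → Beta (.lam a b) (.lam a b')

def BetaStar : Tm → Tm → Prop := Relation.ReflTransGen Beta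
def IsBetaNormal (A : Tm) : Prop := ∀ B, ¬ Beta A B
/-- B is the β-normal form of A -/
def BetaNF (A B : Tm) : Prop := BetaStar A B ∧ IsBetaNormal B
/-- β-equality (via confluence: common reduct) -/
def BetaEq (A B : Tm) : Prop := ∃ C, BetaStar A C ∧ BetaStar B C

def headIsLogical : Tm → Prop
  | .app f _ => headIsLogical f
  | .cnot => True
  | .cor => True
  | .cpi _ => True
  | _ => False

/-- atomic formula: β-normal, head not a logical constant -/
def Atomic (A : Tm) : Prop := IsBetaNormal A ∧ ¬ headIsLogical A

def OccursParam (k : ℕ) (a : Ty) : Tm → Prop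
  | .param m b => k = m ∧ a = b
  | .app f x => OccursParam k a f ∨ OccursParam k a x
  | .lam _ b => OccursParam k a b
  | _ => False

/-- β-normal sentence -/
def BNSent (C : Tm) : Prop := Sent C ∧ IsBetaNormal C

/-- The sequent calculus G_β, with the number of proof steps as index. -/
inductive Der : Finset Tm → ℕ → Prop
  | init {Δ : Finset Tm} {A} : Atomic A → Der (insert A (insert (NEG A) Δ)) 1
  | negI {Δ : Finset Tm} {A n} : Der (insert A Δ) n → Der (insert (NEG (NEG A)) Δ) (n+1)
  | orL {Δ : Finset Tm} {A B n m} : Der (insert (NEG A) Δ) n → Der (insert (NEG B) Δ) m →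
      Der (insert (NEG (OR A B)) Δ) (n+m+1)
  | orR {Δ : Finset Tm} {A B n} : Der (insert A (insert B Δ)) n → Der (insert (OR A B) Δ) (n+1)
  | piL {Δ : Finset Tm} {a F C D n} : HasTy [] C a → BetaNF (.app F C) D →
      Der (insert (NEG D) Δ) n → Der (insert (NEG (PI a F)) Δ) (n+1)
  | piR {Δ : Finset Tm} {a F c D n} : BetaNF (.app F (.param c a)) D →
      (∀ B ∈ insert (PI a F) Δ, ¬ OccursParam c a B) →
      Der (insert D Δ) n → Der (insert (PI a F) Δ) (n+1)

/-- A is k-cut-strong for G_β -/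
def CutStrong (k : ℕ) (A : Tm) : Prop :=
  ∀ (Δ : Finset Tm) (C : Tm) (n m : ℕ), BNSent C →
    Der (insert C Δ) n → Der (insert (NEG C) Δ) m →
    ∃ s ≤ n + m + k, Der (insert (NEG A) Δ) s

/-- Leibniz equality M ≐^α N := Π^{α→o}(λP. ¬(P M) ∨ (P N)) -/
def leib (a : Ty) (M N : Tm) : Tm :=
  PI (.arr a .o) (.lam (.arr a .o)
    (OR (NEG (.app (.var 0) (shift 1 0 M))) (.app (.var 0) (shift 1 0 N))))

/-- comprehension instance C^I := ∃P:ι→o. ∀X:ι. (P X ⟺ X ≐^ι X),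
    where ∃X:γ.F := ¬Π^γ(λX.¬F) -/
def CompInst : Tm :=
  NEG (PI (.arr .i .o) (.lam (.arr .i .o)
    (NEG (PI .i (.lam .i
      (IFF (.app (.var 1) (.var 0)) (leib .i (.var 0) (.var 0))))))))

@[simp] lemma shift_zero (c : ℕ) (t : Tm) : shift 0 c t = t := by
  induction t generalizing c <;> simp [shift, *]

lemma HasTy.append {Γ : List Ty} {t : Tm} {a : Ty} (h : HasTy Γ t a) (Γ' : List Ty) :
    HasTy (Γ ++ Γ') t a := by
  induction h with
  | var h =>
    exact .var (by rw [List.getElem?_append_left (List.getElem?_eq_some_iff.mp h).1]; exact h)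
  | param => exact .param
  | cnot => exact .cnot
  | cor => exact .cor
  | cpi => exact .cpi
  | app _ _ ihf ihx => exact .app ihf ihx
  | lam _ ih => exact .lam ih

lemma HasTy.subst_eq_self {Γ : List Ty} {t : Tm} {a : Ty} (h : HasTy Γ t a) {k : ℕ} (s : Tm)
    (hk : Γ.length ≤ k) : subst k s t = t := by
  induction h generalizing k with
  | @var Γ n b h =>
    have hn := (List.getElem?_eq_some_iff.mp h).1
    simp [subst, show n ≠ k by omega, show ¬ k < n by omega]
  | app _ _ ihf ihx => simp [subst, ihf hk, ihx hk]
  | lam _ ih => simp [subst, ih (Nat.succ_le_succ hk)]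
  | _ => rfl

def isLam : Tm → Bool
  | .lam _ _ => true
  | _ => false

def redexFree : Tm → Bool
  | .app f x => !(isLam f) && redexFree f && redexFree x
  | .lam _ b => redexFree b
  | _ => true

lemma Beta.redexFree_eq_false {t u : Tm} (h : Beta t u) : redexFree t = false := by
  induction h <;> simp [redexFree, isLam, *]

lemma isBetaNormal_of_redexFree {t : Tm} (h : redexFree t = true) : IsBetaNormal t :=
  fun _ hb => by simp [hb.redexFree_eq_false] at h

lemma betaNF_of_beta {t u : Tm} (h : Beta t u) (hu : redexFree u = true) : BetaNF t u :=
  ⟨.single h, isBetaNormal_of_redexFree hu⟩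

lemma IsBetaNormal.app {f x : Tm} (hf : IsBetaNormal f) (hx : IsBetaNormal x)
    (hlam : isLam f = false) : IsBetaNormal (.app f x) := by
  intro B hB
  cases hB with
  | beta => simp [isLam] at hlam
  | appl h => exact hf _ h
  | appr h => exact hx _ h

lemma IsBetaNormal.neg {A : Tm} (hA : IsBetaNormal A) : IsBetaNormal (NEG A) :=
  (isBetaNormal_of_redexFree rfl).app hA rfl

lemma IsBetaNormal.or {A B : Tm} (hA : IsBetaNormal A) (hB : IsBetaNormal B) :
    IsBetaNormal (OR A B) :=
  ((isBetaNormal_of_redexFree rfl).app hA rfl).app hB rfl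

lemma atomic_param_app_param (q k : ℕ) (β α : Ty) : Atomic (.app (.param q β) (.param k α)) :=
  ⟨isBetaNormal_of_redexFree rfl, fun h => h⟩

section SwapParam

variable (c d : ℕ) (a : Ty)

def swapParam : Tm → Tm
  | .var n => .var n
  | .param k b => .param (if b = a then Equiv.swap c d k else k) b
  | .cnot => .cnot
  | .cor => .cor
  | .cpi b => .cpi b
  | .app f x => .app (swapParam f) (swapParam x)
  | .lam b t => .lam b (swapParam t)

@[simp] lemma swapParam_swapParam (t : Tm) : swapParam c d a (swapParam c d a t) = t := by
  induction t with
  | param k b => by_cases h : b = a <;> simp [swapParam, h]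
  | _ => simp [swapParam, *]

lemma swapParam_shift (e j : ℕ) (t : Tm) :
    swapParam c d a (shift e j t) = shift e j (swapParam c d a t) := by
  induction t generalizing j with
  | var n => by_cases h : n < j <;> simp [shift, swapParam, h]
  | _ => simp [shift, swapParam, *]

lemma swapParam_subst (k : ℕ) (s t : Tm) :
    swapParam c d a (subst k s t) = subst k (swapParam c d a s) (swapParam c d a t) := by
  induction t generalizing k with
  | var n =>
    rcases Nat.lt_trichotomy n k with h | rfl | h
    · simp [subst, swapParam, h.ne, h.not_gt]
    · simp [subst, swapParam, swapParam_shift]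
    · simp [subst, swapParam, h.ne', h]
  | _ => simp [subst, swapParam, *]

variable {c d a}

lemma Beta.swapParam {t u : Tm} (h : Beta t u) :
    Beta (swapParam c d a t) (swapParam c d a u) := by
  induction h with
  | @beta b B s =>
    rw [swapParam_subst]
    exact .beta
  | appl _ ih => exact .appl ih
  | appr _ ih => exact .appr ih
  | lam _ ih => exact .lam ih

lemma IsBetaNormal.swapParam {t : Tm} (h : IsBetaNormal t) :
    IsBetaNormal (swapParam c d a t) := fun u hu => by
  have hu' := hu.swapParam (c := c) (d := d) (a := a)
  rw [swapParam_swapParam] at hu'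
  exact h _ hu'

lemma BetaNF.swapParam {t u : Tm} (h : BetaNF t u) :
    BetaNF (swapParam c d a t) (swapParam c d a u) :=
  ⟨h.1.lift _ fun _ _ hb => hb.swapParam, h.2.swapParam⟩

lemma HasTy.swapParam {Γ : List Ty} {t : Tm} {b : Ty} (h : HasTy Γ t b) :
    HasTy Γ (swapParam c d a t) b := by
  induction h with
  | var h => exact .var h
  | param => exact .param
  | cnot => exact .cnot
  | cor => exact .cor
  | cpi => exact .cpi
  | app _ _ ihf ihx => exact .app ihf ihx
  | lam _ ih => exact .lam ih

@[simp] lemma headIsLogical_swapParam (t : Tm) :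
    headIsLogical (swapParam c d a t) ↔ headIsLogical t := by
  induction t <;> simp [swapParam, headIsLogical, *]

lemma Atomic.swapParam {t : Tm} (h : Atomic t) : Atomic (CutSim.swapParam c d a t) :=
  ⟨h.1.swapParam, by simpa using h.2⟩

lemma occursParam_swapParam (e : ℕ) (b : Ty) (t : Tm) :
    OccursParam e b (swapParam c d a t) ↔
      OccursParam (if b = a then Equiv.swap c d e else e) b t := by
  induction t with
  | param k b' =>
    by_cases hb : b' = b
    · subst hb
      by_cases h : b' = a
      · subst h
        simp only [swapParam, OccursParam, if_true, and_true]
        exact (Equiv.swap c d).injective.eq_iff.symm.trans (by simp [eq_comm])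
      · simp [swapParam, OccursParam, h]
    · simp [swapParam, OccursParam, Ne.symm hb]
  | app f x ihf ihx => simp [swapParam, OccursParam, ihf, ihx]
  | lam b' t ih => simp [swapParam, OccursParam, ih]
  | _ => simp [swapParam, OccursParam]

lemma swapParam_eq_self {t : Tm} (hc : ¬ OccursParam c a t) (hd : ¬ OccursParam d a t) :
    swapParam c d a t = t := by
  induction t with
  | param k b =>
    by_cases hb : b = a
    · subst hb
      have hkc : k ≠ c := fun h => hc ⟨h.symm, rfl⟩
      have hkd : k ≠ d := fun h => hd ⟨h.symm, rfl⟩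
      simp [swapParam, Equiv.swap_apply_of_ne_of_ne hkc hkd]
    · simp [swapParam, hb]
  | app f x ihf ihx =>
    simp only [OccursParam, not_or] at hc hd
    simp [swapParam, ihf hc.1 hd.1, ihx hc.2 hd.2]
  | lam b t ih => simp [swapParam, ih hc hd]
  | _ => rfl

lemma Der.image_swapParam {Δ : Finset Tm} {n : ℕ} (h : Der Δ n) :
    Der (Δ.image (swapParam c d a)) n := by
  induction h with
  | @init Δ A hA =>
    rw [Finset.image_insert, Finset.image_insert]
    exact .init hA.swapParam
  | negI _ ih =>
    rw [Finset.image_insert] at ih ⊢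
    exact .negI ih
  | orL _ _ ih₁ ih₂ =>
    rw [Finset.image_insert] at ih₁ ih₂ ⊢
    exact .orL ih₁ ih₂
  | orR _ ih =>
    rw [Finset.image_insert, Finset.image_insert] at ih
    rw [Finset.image_insert]
    exact .orR ih
  | piL hty hnf _ ih =>
    rw [Finset.image_insert] at ih ⊢
    exact .piL hty.swapParam hnf.swapParam ih
  | @piR Δ b F e D n hnf hfresh _ ih =>
    rw [Finset.image_insert] at ih ⊢
    refine .piR (c := if b = a then Equiv.swap c d e else e) hnf.swapParam ?_ ih
    intro B hB
    rw [show PI b (CutSim.swapParam c d a F) = CutSim.swapParam c d a (PI b F) from rfl,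
      ← Finset.image_insert] at hB
    obtain ⟨B₀, hB₀, rfl⟩ := Finset.mem_image.mp hB
    rw [occursParam_swapParam]
    by_cases hba : b = a <;> simpa [hba] using hfresh B₀ hB₀

end SwapParam

def paramBound : Tm → ℕ
  | .param k _ => k + 1
  | .app f x => max (paramBound f) (paramBound x)
  | .lam _ b => paramBound b
  | _ => 0

lemma OccursParam.lt_paramBound {k : ℕ} {a : Ty} {t : Tm} (h : OccursParam k a t) :
    k < paramBound t := by
  induction t with
  | param m b => simp [paramBound, h.1]
  | app f x ihf ihx =>
    exact h.elim (fun h => lt_max_of_lt_left (ihf h)) (fun h => lt_max_of_lt_right (ihx h))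
  | lam b t ih => exact ih h
  | _ => exact h.elim

lemma exists_fresh_param (S : Finset Tm) : ∃ c, ∀ B ∈ S, ∀ a, ¬ OccursParam c a B :=
  ⟨S.sup paramBound, fun _ hB _ h => (Finset.le_sup hB).not_gt h.lt_paramBound⟩

lemma Der.exists_rename_eigen {Δ : Finset Tm} {b : Ty} {F D : Tm} {e e' n : ℕ}
    (hnf : BetaNF (.app F (.param e b)) D)
    (he : ∀ B ∈ insert (PI b F) Δ, ¬ OccursParam e b B)
    (he' : ∀ B ∈ insert (PI b F) Δ, ¬ OccursParam e' b B) (h : Der (insert D Δ) n) :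
    ∃ D', BetaNF (.app F (.param e' b)) D' ∧ Der (insert D' Δ) n := by
  have hfix : ∀ B ∈ insert (PI b F) Δ, swapParam e e' b B = B :=
    fun B hB => swapParam_eq_self (he B hB) (he' B hB)
  have hF : swapParam e e' b F = F := by
    simpa [swapParam, PI] using hfix _ (Finset.mem_insert_self _ _)
  have hΔ : Δ.image (swapParam e e' b) = Δ := by
    rw [Finset.image_congr (g := id) fun B hB => hfix B (Finset.mem_insert_of_mem hB),
      Finset.image_id]
  refine ⟨swapParam e e' b D, ?_, ?_⟩
  · simpa [swapParam, hF] using hnf.swapParam (c := e) (d := e') (a := b)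
  · simpa [hΔ] using h.image_swapParam (c := e) (d := e') (a := b)

lemma Der.weaken {Δ : Finset Tm} {n : ℕ} (h : Der Δ n) (X : Tm) : Der (insert X Δ) n := by
  induction n using Nat.strong_induction_on generalizing Δ with
  | _ n ih =>
  cases h with
  | init hA =>
    rw [Finset.insert_comm, Finset.insert_comm X]
    exact .init hA
  | negI h =>
    rw [Finset.insert_comm]
    exact .negI (Finset.insert_comm X _ _ ▸ ih _ (by omega) h)
  | orL h₁ h₂ =>
    rw [Finset.insert_comm]
    exact .orL (Finset.insert_comm X _ _ ▸ ih _ (by omega) h₁)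
      (Finset.insert_comm X _ _ ▸ ih _ (by omega) h₂)
  | @orR _ A B _ h =>
    rw [Finset.insert_comm]
    refine .orR ?_
    rw [Finset.insert_comm B X, Finset.insert_comm A X]
    exact ih _ (by omega) h
  | piL hty hnf h =>
    rw [Finset.insert_comm]
    exact .piL hty hnf (Finset.insert_comm X _ _ ▸ ih _ (by omega) h)
  | @piR Δ b F e D k hnf hfresh h =>
    -- `X` may contain the eigen-parameter `e`: rename it first, at no cost in height.
    obtain ⟨e', he'⟩ := exists_fresh_param (insert (PI b F) (insert X Δ))
    have hsub : insert (PI b F) Δ ⊆ insert (PI b F) (insert X Δ) :=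
      Finset.insert_subset_insert _ (Finset.subset_insert _ _)
    obtain ⟨D', hnf', h'⟩ :=
      Der.exists_rename_eigen hnf hfresh (fun B hB => he' B (hsub hB) b) h
    rw [Finset.insert_comm]
    exact .piR hnf' (fun B hB => he' B hB b) (Finset.insert_comm X _ _ ▸ ih _ (by omega) h')

section Leibniz

variable {Δ : Finset Tm} (k : ℕ) (α : Ty)

lemma der_leib_refl (Γ : Finset Tm) : Der (insert (leib α (.param k α) (.param k α)) Γ) 3 := by
  obtain ⟨q, hq⟩ := exists_fresh_param (insert (leib α (.param k α) (.param k α)) Γ)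
  have hinit := Der.init (Δ := Γ) (atomic_param_app_param q k (.arr α .o) α)
  rw [Finset.insert_comm] at hinit
  exact .piR (betaNF_of_beta .beta rfl) (fun B hB => hq B hB _) (.orR hinit)

variable {k α}

lemma betaNF_app_lam_of_bnSent {C : Tm} (hC : BNSent C) :
    BetaNF (.app (.lam (.arr α .o)
        (OR (NEG (.app (.var 0) (.param k α))) (.app (.var 0) (.param k α)))) (.lam α C))
      (OR (NEG C) C) := by
  have hred : Beta (.app (.lam α C) (.param k α)) C := by
    simpa [hC.1.subst_eq_self] using Beta.beta (a := α) (B := C) (s := .param k α)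
  have hbeta : Beta (.app (.lam (.arr α .o)
        (OR (NEG (.app (.var 0) (.param k α))) (.app (.var 0) (.param k α)))) (.lam α C))
      (OR (NEG (.app (.lam α C) (.param k α))) (.app (.lam α C) (.param k α))) := by
    simpa [subst, OR, NEG] using Beta.beta (a := .arr α .o) (s := .lam α C)
      (B := OR (NEG (.app (.var 0) (.param k α))) (.app (.var 0) (.param k α)))
  refine ⟨.head hbeta (.head (.appl (.appr (.appr hred))) (.single (.appr hred))),
    hC.2.neg.or hC.2⟩

lemma der_neg_leib_refl_of_cut {C : Tm} {n m : ℕ} (hC : BNSent C) (hn : Der (insert C Δ) n)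
    (hm : Der (insert (NEG C) Δ) m) :
    Der (insert (NEG (leib α (.param k α) (.param k α))) Δ) (n + m + 3) := by
  have h := Der.piL (.lam (hC.1.append [α])) (betaNF_app_lam_of_bnSent (k := k) hC)
    (.orL hn.negI hm)
  rwa [show n + 1 + m + 1 + 1 = n + m + 3 by omega] at h

end Leibniz

lemma der_neg_iff {Δ : Finset Tm} {P Q : Tm} {n : ℕ}
    (h : Der (insert (NEG (IMP P Q)) (insert (NEG (IMP Q P)) Δ)) n) :
    Der (insert (NEG (IFF P Q)) Δ) (n + 2) :=
  .negI (.orR h)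

lemma der_neg_neg_of_imp {Δ : Finset Tm} {P Q : Tm} {n : ℕ} (hP : Atomic P)
    (hQ : Der (insert Q (insert P Δ)) n) :
    Der (insert (NEG (NEG P)) (insert (NEG (IMP Q P)) Δ)) (n + 4) := by
  have hinit := Der.init (Δ := Δ) hP
  rw [Finset.insert_comm] at hinit
  have h := Der.orL hQ.negI hinit
  rw [Finset.insert_comm] at h
  exact h.negI

lemma der_neg_compInst {Δ : Finset Tm} {p n : ℕ}
    (hp : ∀ B ∈ Δ, ¬ OccursParam p (.arr .i .o) B)
    (h : Der (insert (NEG (PI .i (.lam .i (IFF (.app (.param p (.arr .i .o)) (.var 0))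
      (leib .i (.var 0) (.var 0)))))) Δ) n) :
    Der (insert (NEG CompInst) Δ) (n + 2) := by
  refine .negI (.piR (betaNF_of_beta .beta rfl) ?_ h)
  simp only [Finset.mem_insert, forall_eq_or_imp]
  exact ⟨by simp [PI, OccursParam, NEG, IFF, OR, IMP, leib, shift], hp⟩

/-- the comprehension instance C^I is 16-cut-strong in G_β -/
theorem stmt19 : CutStrong 16 CompInst := by
  intro Δ C n m hC hn hm
  obtain ⟨p, hp⟩ := exists_fresh_param Δ
  let P : Tm := .app (.param p (.arr .i .o)) (.param 0 .i)
  let Q : Tm := leib .i (.param 0 .i) (.param 0 .i)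
  have hPQ : Der (insert (NEG (NEG P)) (insert (NEG (IMP Q P)) Δ)) 7 :=
    der_neg_neg_of_imp (atomic_param_app_param _ _ _ _) (der_leib_refl _ _ _)
  have hQP : Der (insert (NEG Q) (insert (NEG (IMP Q P)) Δ)) (n + m + 3) :=
    der_neg_leib_refl_of_cut hC (Finset.insert_comm C _ _ ▸ hn.weaken _)
      (Finset.insert_comm (NEG C) _ _ ▸ hm.weaken _)
  have hIff : Der (insert (NEG (IFF P Q)) Δ) (7 + (n + m + 3) + 1 + 2) :=
    der_neg_iff (.orL hPQ hQP)
  exact ⟨_, by omega,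
    der_neg_compInst (fun B hB => hp B hB _) (.piL .param (betaNF_of_beta .beta rfl) hIff)⟩

end CutSim
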